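/- The temporal torsion d-tensors H^{(k)}_{(1)1j} = −∂N^{(k)}_{(1)j}/∂t of the Cartan connection of the 2D-monolayer Lagrangian satisfy: H^{(1)}_{(1)11} = (∂𝒰/∂t)·ṙ² − (2|V|/r²)·ṙ + (3m e^{−2|V|t/r}/(2p r⁵))·ṙ²·φ̇², H^{(1)}_{(1)12} = (m e^{−2|V|t/r}/(p r⁵))·ṙ³·φ̇, and H^{(2)}_{(1)11} = H^{(2)}_{(1)12} = 0, at every point with r > 0. -/

import Mathlib

/-- The fundamental metrical d-tensor g_{ij} of the 2D-monolayer Lagrangian. -/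
noncomputable def gE (m p V : ℝ) (i j : Fin 2) (t r φ rd φd : ℝ) : ℝ :=
  if i = 0 ∧ j = 0 then (m - 2 * p * r ^ 5 * |V| * Real.exp (2 * |V| * t / r) * (rd ^ 3)⁻¹) / 2
  else if i = 1 ∧ j = 1 then m * r ^ 2 / 2 else 0

/-- The inverse fundamental metric g^{ij}. -/
noncomputable def gI (m p V : ℝ) (i j : Fin 2) (t r φ rd φd : ℝ) : ℝ :=
  if i = 0 ∧ j = 0 then 2 / (m - 2 * p * r ^ 5 * |V| * Real.exp (2 * |V| * t / r) * (rd ^ 3)⁻¹)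
  else if i = 1 ∧ j = 1 then 2 / (m * r ^ 2) else 0

/-- The canonical nonlinear connection components N^{(q)}_{(1)k}. -/
noncomputable def NN (m p V : ℝ) (𝒰 : ℝ → ℝ → ℝ) (q k : Fin 2) (t r φ rd φd : ℝ) : ℝ :=
  if q = 0 then
    if k = 0 then
      -|V| / (2 * r) + (2 * |V| * t / r ^ 2 - 5 / r) * rd - 𝒰 t r * rd ^ 2
        + 3 * m * Real.exp (-(2 * |V| * t) / r) / (4 * p * |V| * r ^ 4) * rd ^ 2 * φd ^ 2
    else m * Real.exp (-(2 * |V| * t) / r) / (2 * p * |V| * r ^ 4) * rd ^ 3 * φd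
  else if k = 0 then φd / r else rd / r

/-- Partial derivative ∂F/∂x^k, with (x¹,x²) = (r,φ). -/
noncomputable def dx (k : Fin 2) (F : ℝ → ℝ → ℝ → ℝ → ℝ → ℝ) (t r φ rd φd : ℝ) : ℝ :=
  if k = 0 then deriv (fun a => F t a φ rd φd) r else deriv (fun a => F t r a rd φd) φ

/-- Partial derivative ∂F/∂y^k, with (y¹,y²) = (ṙ,φ̇). -/
noncomputable def dy (k : Fin 2) (F : ℝ → ℝ → ℝ → ℝ → ℝ → ℝ) (t r φ rd φd : ℝ) : ℝ :=
  if k = 0 then deriv (fun a => F t r φ a φd) rd else deriv (fun a => F t r φ rd a) φd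

/-- Horizontal derivative δF/δx^k = ∂F/∂x^k − N^{(q)}_{(1)k}·∂F/∂y^q. -/
noncomputable def del (m p V : ℝ) (𝒰 : ℝ → ℝ → ℝ) (k : Fin 2)
    (F : ℝ → ℝ → ℝ → ℝ → ℝ → ℝ) (t r φ rd φd : ℝ) : ℝ :=
  dx k F t r φ rd φd - ∑ q : Fin 2, NN m p V 𝒰 q k t r φ rd φd * dy q F t r φ rd φd

/-- Temporal Cartan coefficients G^k_{j1} = (g^{ks}/2)·∂g_{sj}/∂t. -/
noncomputable def Gtime (m p V : ℝ) (k j : Fin 2) (t r φ rd φd : ℝ) : ℝ :=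
  ∑ s : Fin 2, gI m p V k s t r φ rd φd / 2 * deriv (fun a => gE m p V s j a r φ rd φd) t

/-- Vertical Cartan coefficients C^{i(1)}_{j(k)} = (g^{is}/2)·∂g_{js}/∂y^k. -/
noncomputable def Cv (m p V : ℝ) (i j k : Fin 2) (t r φ rd φd : ℝ) : ℝ :=
  ∑ s : Fin 2, gI m p V i s t r φ rd φd / 2 * dy k (gE m p V j s) t r φ rd φd

/-- Spatial Cartan coefficients
L^i_{jk} = (g^{is}/2)·(δg_{js}/δx^k + δg_{ks}/δx^j − δg_{jk}/δx^s). -/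
noncomputable def Lc (m p V : ℝ) (𝒰 : ℝ → ℝ → ℝ) (i j k : Fin 2) (t r φ rd φd : ℝ) : ℝ :=
  ∑ s : Fin 2, gI m p V i s t r φ rd φd / 2 *
    (del m p V 𝒰 k (gE m p V j s) t r φ rd φd + del m p V 𝒰 j (gE m p V k s) t r φ rd φd
      - del m p V 𝒰 s (gE m p V j k) t r φ rd φd)

/-- the temporal torsion d-tensors H^{(k)}_{(1)1j} = −∂N^{(k)}_{(1)j}/∂t
of the Cartan connection of the 2D-monolayer Lagrangian. -/
theorem stmt11 (m p V : ℝ) (hm : 0 < m) (hp : 0 < p) (hV : V ≠ 0)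
    (𝒰 : ℝ → ℝ → ℝ) (h𝒰 : ∀ x : ℝ, Differentiable ℝ (fun s => 𝒰 s x))
    (t r φ rd φd : ℝ) (hr : 0 < r) :
    -deriv (fun a => NN m p V 𝒰 0 0 a r φ rd φd) t
        = deriv (fun a => 𝒰 a r) t * rd ^ 2 - 2 * |V| / r ^ 2 * rd
          + 3 * m * Real.exp (-(2 * |V| * t) / r) / (2 * p * r ^ 5) * rd ^ 2 * φd ^ 2
      ∧ -deriv (fun a => NN m p V 𝒰 0 1 a r φ rd φd) t
        = m * Real.exp (-(2 * |V| * t) / r) / (p * r ^ 5) * rd ^ 3 * φd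
      ∧ -deriv (fun a => NN m p V 𝒰 1 0 a r φ rd φd) t = 0
      ∧ -deriv (fun a => NN m p V 𝒰 1 1 a r φ rd φd) t = 0 := by

  have hr0 : r ≠ 0 := hr.ne'
  have hV0 : (|V|) ≠ 0 := abs_ne_zero.mpr hV
  have hp0 : p ≠ 0 := hp.ne'
  have hexp : HasDerivAt (fun a : ℝ => Real.exp (-(2*(|V|)*a)/r))
      (Real.exp (-(2*(|V|)*t)/r) * (-(2*(|V|))/r)) t := by
    have h : HasDerivAt (fun a : ℝ => -(2*(|V|)*a)/r) (-(2*(|V|))/r) t := by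
      simpa using (((hasDerivAt_id t).const_mul (2*(|V|))).neg.div_const r)
    exact h.exp
  refine ⟨?_, ?_, ?_, ?_⟩
  · have h1 : HasDerivAt (fun a => NN m p V 𝒰 0 0 a r φ rd φd)
        (((2*(|V|)/r^2)*rd - deriv (fun s => 𝒰 s r) t * rd^2)
          + 3*m*(Real.exp (-(2*(|V|)*t)/r) * (-(2*(|V|))/r))/(4*p*(|V|)*r^4)*rd^2*φd^2) t := by
      simp only [NN, if_pos rfl]
      have hlin : HasDerivAt (fun a : ℝ => -(|V|) / (2*r) + (2*(|V|)*a/r^2 - 5/r)*rd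
          - 𝒰 a r * rd^2) ((2*(|V|)/r^2)*rd - deriv (fun s => 𝒰 s r) t * rd^2) t := by
        have h2 : HasDerivAt (fun a : ℝ => -(|V|) / (2*r) + (2*(|V|)*a/r^2 - 5/r)*rd)
            ((2*(|V|)/r^2)*rd) t := by
          have : HasDerivAt (fun a : ℝ => 2*(|V|)*a/r^2 - 5/r) (2*(|V|)/r^2) t := by
            simpa using ((((hasDerivAt_id t).const_mul (2*(|V|))).div_const (r^2)).sub_const (5/r))
          simpa using (this.mul_const rd).const_add (-(|V|) / (2*r))
        exact h2.sub ((((h𝒰 r) t).hasDerivAt).mul_const (rd^2))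
      have hex : HasDerivAt (fun a : ℝ => 3*m*Real.exp (-(2*(|V|)*a)/r)/(4*p*(|V|)*r^4)*rd^2*φd^2)
          (3*m*(Real.exp (-(2*(|V|)*t)/r) * (-(2*(|V|))/r))/(4*p*(|V|)*r^4)*rd^2*φd^2) t := by
        have := (((hexp.const_mul (3*m)).div_const (4*p*(|V|)*r^4)).mul_const (rd^2)).mul_const (φd^2)
        convert this using 1 <;> ring
      exact hlin.add hex
    rw [h1.deriv]
    field_simp
    ring
  · have h1 : HasDerivAt (fun a => NN m p V 𝒰 0 1 a r φ rd φd)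
        (m*(Real.exp (-(2*(|V|)*t)/r) * (-(2*(|V|))/r))/(2*p*(|V|)*r^4)*rd^3*φd) t := by
      simp only [NN, if_pos rfl]
      have := (((hexp.const_mul m).div_const (2*p*(|V|)*r^4)).mul_const (rd^3)).mul_const φd
      convert this using 2 <;> norm_num <;> rfl
    rw [h1.deriv]
    field_simp
  · have : (fun a => NN m p V 𝒰 1 0 a r φ rd φd) = fun _ => φd / r := by
      funext a; simp [NN]
    rw [this, deriv_const]; simp
  · have : (fun a => NN m p V 𝒰 1 1 a r φ rd φd) = fun _ => rd / r := by
      funext a; simp [NN]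
    rw [this, deriv_const]; simp
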